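/- Let p ∈ (0,1), β ∈ ℝ, k ∈ {1,2}, and let π : ℤ₊ → (0,∞) be a reversible weight for Δ_p. Then both exceptional points −β/2 − p and −β/2 + p belong to the spectrum of the bounded self-adjoint operator H_{p,β,k/3,0} on ℓ²(ℤ₊, dπ). -/

import Mathlib

open MeasureTheory Filter Matrix Polynomial

noncomputable section

/-- `resid x` is the residue mod 3 of `x` after dividing out the largest power of 3. -/
def resid (x : ℕ) : ℕ := (x / 3 ^ (x.factorization 3)) % 3

/-- The transition probabilities `p(x,y)` of the self-similar `p`-Laplacian:
`p(0,1) = 1`; for `x ≥ 1`, `(p(x,x−1), p(x,x+1)) = (1−p, p)` if `3^{−m(x)} x ≡ 1 (mod 3)`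
and `(p, 1−p)` if `3^{−m(x)} x ≡ 2 (mod 3)`; `p(x,y) = 0` if `|x−y| ≠ 1`. -/
def hop (p : ℝ) (x y : ℕ) : ℝ :=
  if y = x + 1 then (if x = 0 then 1 else if resid x = 1 then p else 1 - p)
  else if x = y + 1 then (if resid x = 1 then 1 - p else p)
  else 0

/-- The self-similar Laplacian `Δ_p` acting on sequences `f : ℤ₊ → ℂ`. -/
def lap (p : ℝ) (f : ℕ → ℂ) : ℕ → ℂ := fun x =>
  if x = 0 then f 0 - f 1
  else f x - (hop p x (x - 1) : ℂ) * f (x - 1) - (hop p x (x + 1) : ℂ) * f (x + 1)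

/-- The self-similar almost Mathieu operator `H_{p,β,α,θ}` acting on sequences. -/
def ham (p β α θ : ℝ) (f : ℕ → ℂ) : ℕ → ℂ := fun x =>
  if x = 0 then ((β * Real.cos θ : ℝ) : ℂ) * f 0 - f 1
  else ((β * Real.cos (2 * Real.pi * α * (x : ℝ) + θ) : ℝ) : ℂ) * f x
      - (hop p x (x - 1) : ℂ) * f (x - 1) - (hop p x (x + 1) : ℂ) * f (x + 1)

/-- The level-`l` Laplacian `Δ^(l)_p` as a `(3^l+1) × (3^l+1)` matrix (complex entries). -/
def lapMatrix (p : ℝ) (l : ℕ) : Matrix (Fin (3 ^ l + 1)) (Fin (3 ^ l + 1)) ℂ :=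
  Matrix.of fun i j =>
    if (i : ℕ) = 0 then (if (j : ℕ) = 0 then 1 else if (j : ℕ) = 1 then -1 else 0)
    else if (i : ℕ) = 3 ^ l then
      (if (j : ℕ) = 3 ^ l then 1 else if (j : ℕ) + 1 = 3 ^ l then -1 else 0)
    else if (j : ℕ) = (i : ℕ) then 1
    else if (j : ℕ) + 1 = (i : ℕ) then -(hop p i (i - 1) : ℂ)
    else if (j : ℕ) = (i : ℕ) + 1 then -(hop p i (i + 1) : ℂ)
    else 0

/-- The level-`l` almost Mathieu operator `H^(l)_{p,β,α,θ}` as a `(3^l+1) × (3^l+1)` matrix. -/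
def hamMatrix (p β α θ : ℝ) (l : ℕ) : Matrix (Fin (3 ^ l + 1)) (Fin (3 ^ l + 1)) ℂ :=
  Matrix.of fun i j =>
    if (i : ℕ) = 0 then
      (if (j : ℕ) = 0 then ((β * Real.cos θ : ℝ) : ℂ) else if (j : ℕ) = 1 then -1 else 0)
    else if (i : ℕ) = 3 ^ l then
      (if (j : ℕ) = 3 ^ l then ((β * Real.cos (2 * Real.pi * α * ((3 ^ l : ℕ) : ℝ) + θ) : ℝ) : ℂ)
       else if (j : ℕ) + 1 = 3 ^ l then -1 else 0)
    else if (j : ℕ) = (i : ℕ) then ((β * Real.cos (2 * Real.pi * α * ((i : ℕ) : ℝ) + θ) : ℝ) : ℂ)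
    else if (j : ℕ) + 1 = (i : ℕ) then -(hop p i (i - 1) : ℂ)
    else if (j : ℕ) = (i : ℕ) + 1 then -(hop p i (i + 1) : ℂ)
    else 0

/-- The set of eigenvalues (in ℂ) of a complex square matrix. -/
def matSpec {n : ℕ} (M : Matrix (Fin n) (Fin n) ℂ) : Set ℂ :=
  {z | ∃ v : Fin n → ℂ, v ≠ 0 ∧ M.mulVec v = z • v}

/-- The spectral decimation function `R_{Δ_p}(z) = z(z+p−2)(z−p−1)/(p(1−p))`. -/
def Rlap (p : ℝ) (z : ℂ) : ℂ := z * (z + (p : ℂ) - 2) * (z - (p : ℂ) - 1) / ((p : ℂ) * (1 - (p : ℂ)))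

/-- The spectral decimation function `R_{p,β,k/3,0}` of the level-1 self-similar AMO. -/
def Ramo (p β : ℝ) (z : ℂ) : ℂ :=
  (-(β : ℂ) + 2 * (p : ℂ) - 2 * z) *
    ((β : ℂ) ^ 2 + 2 * (β : ℂ) * (p : ℂ) + (β : ℂ) * z - 2 * (p : ℂ) * z - 2 * (p : ℂ)
      - 2 * z ^ 2 + 2) / (4 * (p : ℂ) * (1 - (p : ℂ)))

/-- Real version of `Ramo`. -/
def RamoR (p β z : ℝ) : ℝ :=
  (-β + 2 * p - 2 * z) * (β ^ 2 + 2 * β * p + β * z - 2 * p * z - 2 * p - 2 * z ^ 2 + 2) /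
    (4 * p * (1 - p))

/-- The function `φ(z) = 4p(p−1)/(4p² − (β+2z)²)`. -/
def phiFun (p β : ℝ) (z : ℂ) : ℂ :=
  4 * (p : ℂ) * ((p : ℂ) - 1) / (4 * (p : ℂ) ^ 2 - ((β : ℂ) + 2 * z) ^ 2)

/-- The function `ψ(z) = −(β² + 2βp + βz − 2pz − 2p − 2z² + 2)/(β + 2p + 2z)`. -/
def psiFun (p β : ℝ) (z : ℂ) : ℂ :=
  -((β : ℂ) ^ 2 + 2 * (β : ℂ) * (p : ℂ) + (β : ℂ) * z - 2 * (p : ℂ) * z - 2 * (p : ℂ)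
      - 2 * z ^ 2 + 2) / ((β : ℂ) + 2 * (p : ℂ) + 2 * z)

/-- The weighted measure on `ℕ` associated with a weight `w`, giving `{x}` mass `w x`. -/
def wMeasure (w : ℕ → ℝ) : Measure ℕ :=
  Measure.sum fun x => (ENNReal.ofReal (w x)) • Measure.dirac x

/-- Membership in the weighted `ℓ²`-space `ℓ²(ℤ₊, dπ)`. -/
def MemL2 (w : ℕ → ℝ) (f : ℕ → ℂ) : Prop := Summable fun x => ‖f x‖ ^ 2 * w x


section ExcAux
set_option linter.unusedSectionVars false

lemma resid_of_mod (x : ℕ) (h : x % 3 ≠ 0) : resid x = x % 3 := by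
  have h3 : ¬ (3 ∣ x) := by omega
  unfold resid
  rw [Nat.factorization_eq_zero_of_not_dvd h3, pow_zero, Nat.div_one]

lemma resid_three_mul (a : ℕ) (ha : a ≠ 0) : resid (3 * a) = resid a := by
  unfold resid
  have h3 : (3:ℕ).Prime := by norm_num
  rw [Nat.factorization_mul (by norm_num) ha, Finsupp.add_apply,
    Nat.Prime.factorization h3, Finsupp.single_eq_same, pow_add, pow_one,
    Nat.mul_div_mul_left _ _ (by norm_num : 0 < 3)]

lemma resid_3m1 (m : ℕ) : resid (3*m+1) = 1 := by
  rw [resid_of_mod _ (by omega)]; omega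
lemma resid_3m2 (m : ℕ) : resid (3*m+2) = 2 := by
  rw [resid_of_mod _ (by omega)]; omega
lemma resid_one : resid 1 = 1 := by have := resid_3m1 0; simpa using this
lemma resid_two : resid 2 = 2 := by have := resid_3m2 0; simpa using this

lemma resid_pow (u : ℕ) : resid (3^u) = 1 := by
  induction u with
  | zero => exact resid_one
  | succ n ih => rw [pow_succ, mul_comm, resid_three_mul _ (by positivity)]; exact ih


lemma hop_right (p : ℝ) (x : ℕ) (hx : x ≠ 0) :
    hop p x (x+1) = if resid x = 1 then p else 1 - p := by
  simp [hop, hx]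

lemma hop_left (p : ℝ) (x : ℕ) :
    hop p (x+1) x = if resid (x+1) = 1 then 1 - p else p := by
  have h : ¬ (x = (x+1) + 1) := by omega
  simp [hop, h]

lemma cos_23 : Real.cos (2*Real.pi/3) = -(1/2) := by
  have : (2*Real.pi/3) = Real.pi - Real.pi/3 := by ring
  rw [this, Real.cos_pi_sub, Real.cos_pi_div_three]

lemma cos_43 : Real.cos (4*Real.pi/3) = -(1/2) := by
  have : (4*Real.pi/3) = Real.pi + Real.pi/3 := by ring
  rw [this, Real.cos_add, Real.cos_pi, Real.sin_pi, Real.cos_pi_div_three]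
  ring

lemma cos_83 : Real.cos (8*Real.pi/3) = -(1/2) := by
  have : (8*Real.pi/3) = 2*Real.pi/3 + (1:ℤ)*(2*Real.pi) := by push_cast; ring
  rw [this, Real.cos_add_int_mul_two_pi, cos_23]

lemma cos_val (k : ℕ) (hk : k = 1 ∨ k = 2) (x : ℕ) :
    Real.cos (2 * Real.pi * ((k:ℝ)/3) * (x:ℝ) + 0) =
      if x % 3 = 0 then 1 else -(1/2) := by
  obtain ⟨m, r, hr3, rfl⟩ : ∃ m r, r < 3 ∧ x = 3*m+r :=
    ⟨x/3, x%3, Nat.mod_lt _ (by norm_num), (Nat.div_add_mod x 3).symm⟩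
  have hmod : (3*m+r) % 3 = r := by omega
  rw [hmod]
  interval_cases r <;> rcases hk with rfl | rfl
  · rw [show 2*Real.pi*((((1:ℕ)):ℝ)/3)*((3*m+0:ℕ):ℝ) + 0 = 0 + ((m:ℤ))*(2*Real.pi) by push_cast; ring]
    rw [Real.cos_add_int_mul_two_pi]; simp
  · rw [show 2*Real.pi*((((2:ℕ)):ℝ)/3)*((3*m+0:ℕ):ℝ) + 0 = 0 + ((2*m:ℤ))*(2*Real.pi) by push_cast; ring]
    rw [Real.cos_add_int_mul_two_pi]; simp
  · rw [show 2*Real.pi*((((1:ℕ)):ℝ)/3)*((3*m+1:ℕ):ℝ) + 0 = 2*Real.pi/3 + ((m:ℤ))*(2*Real.pi) by push_cast; ring]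
    rw [Real.cos_add_int_mul_two_pi, cos_23]; norm_num
  · rw [show 2*Real.pi*((((2:ℕ)):ℝ)/3)*((3*m+1:ℕ):ℝ) + 0 = 4*Real.pi/3 + ((2*m:ℤ))*(2*Real.pi) by push_cast; ring]
    rw [Real.cos_add_int_mul_two_pi, cos_43]; norm_num
  · rw [show 2*Real.pi*((((1:ℕ)):ℝ)/3)*((3*m+2:ℕ):ℝ) + 0 = 4*Real.pi/3 + ((m:ℤ))*(2*Real.pi) by push_cast; ring]
    rw [Real.cos_add_int_mul_two_pi, cos_43]; norm_num
  · rw [show 2*Real.pi*((((2:ℕ)):ℝ)/3)*((3*m+2:ℕ):ℝ) + 0 = 8*Real.pi/3 + ((2*m:ℤ))*(2*Real.pi) by push_cast; ring]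
    rw [Real.cos_add_int_mul_two_pi, cos_83]; norm_num

lemma hop_3m_left (p : ℝ) (m : ℕ) (hm : 1 ≤ m) :
    hop p (3*m) (3*m-1) = if resid m = 1 then 1 - p else p := by
  rw [show 3*m-1 = 3*(m-1)+2 by omega, show 3*m = 3*(m-1)+2+1 by omega, hop_left,
    show 3*(m-1)+2+1 = 3*m by omega, resid_three_mul m (by omega)]

lemma hop_3m_right (p : ℝ) (m : ℕ) (hm : 1 ≤ m) :
    hop p (3*m) (3*m+1) = if resid m = 1 then p else 1 - p := by
  rw [hop_right _ _ (by omega), resid_three_mul m (by omega)]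

lemma hop_3m1_right (p : ℝ) (m : ℕ) : hop p (3*m+1) (3*m+1+1) = p := by
  rw [hop_right _ _ (by omega), resid_3m1, if_pos rfl]

lemma hop_3m2_left (p : ℝ) (m : ℕ) : hop p (3*m+2) (3*m+1) = p := by
  rw [show 3*m+2 = (3*m+1)+1 by omega, hop_left, show 3*m+1+1 = 3*m+2 by omega, resid_3m2]
  norm_num

def qq (p : ℝ) (m : ℕ) : ℝ := if resid m = 1 then (1 - p) / p else p / (1 - p)

def cc (p σ : ℝ) : ℕ → ℝ
  | 0 => 0
  | 1 => 1
  | m + 2 => -σ * qq p (m + 2) * cc p σ (m + 1)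

def PP (p : ℝ) : ℕ → ℝ
  | 0 => 1
  | 1 => 1
  | m + 2 => qq p (m + 2) * PP p (m + 1)

def gg (p σ : ℝ) (t : ℕ) (x : ℕ) : ℂ :=
  if x % 3 = 0 ∨ x / 3 = 0 ∨ 3 ^ t ≤ x / 3 then 0
  else if x % 3 = 1 then ((cc p σ (x / 3) : ℝ) : ℂ) else ((σ * cc p σ (x / 3) : ℝ) : ℂ)

lemma cc_step (p σ : ℝ) (m : ℕ) (hm : 2 ≤ m) :
    cc p σ m = -σ * qq p m * cc p σ (m-1) := by
  obtain ⟨n, rfl⟩ : ∃ n, m = n + 2 := ⟨m - 2, by omega⟩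
  simp [cc]

lemma PP_step (p : ℝ) (m : ℕ) (hm : 2 ≤ m) : PP p m = qq p m * PP p (m-1) := by
  obtain ⟨n, rfl⟩ : ∃ n, m = n + 2 := ⟨m - 2, by omega⟩
  simp [PP]

lemma gg_0 (p σ : ℝ) (t m : ℕ) : gg p σ t (3*m) = 0 := by
  unfold gg; rw [if_pos (Or.inl (by omega))]

lemma gg_1 (p σ : ℝ) (t m : ℕ) (h1 : 1 ≤ m) (h2 : m < 3^t) :
    gg p σ t (3*m+1) = ((cc p σ m : ℝ) : ℂ) := by
  unfold gg
  rw [if_neg (by push_neg; omega), if_pos (by omega), show (3*m+1)/3 = m by omega]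

lemma gg_1' (p σ : ℝ) (t m : ℕ) (h : m = 0 ∨ 3^t ≤ m) : gg p σ t (3*m+1) = 0 := by
  unfold gg
  rw [if_pos]
  rw [show (3*m+1)/3 = m by omega, show (3*m+1)%3 = 1 by omega]
  omega

lemma gg_2 (p σ : ℝ) (t m : ℕ) (h1 : 1 ≤ m) (h2 : m < 3^t) :
    gg p σ t (3*m+2) = ((σ * cc p σ m : ℝ) : ℂ) := by
  unfold gg
  rw [if_neg (by push_neg; omega), if_neg (by omega), show (3*m+2)/3 = m by omega]

lemma gg_2' (p σ : ℝ) (t m : ℕ) (h : m = 0 ∨ 3^t ≤ m) : gg p σ t (3*m+2) = 0 := by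
  unfold gg
  rw [if_pos]
  rw [show (3*m+2)/3 = m by omega, show (3*m+2)%3 = 2 by omega]
  omega

lemma ham_eq (p β σ : ℝ) (hp : p ∈ Set.Ioo (0:ℝ) 1) (hσ : σ = 1 ∨ σ = -1)
    (k : ℕ) (hk : k = 1 ∨ k = 2) (t : ℕ) (ht : 1 ≤ t) (x : ℕ) :
    ham p β ((k:ℝ)/3) 0 (gg p σ t) x - ((-β/2 - σ*p : ℝ) : ℂ) * gg p σ t x =
      if x = 3 then ((-p : ℝ) : ℂ)
      else if x = 3^(t+1) then ((-(1-p)*σ*cc p σ (3^t-1) : ℝ) : ℂ) else 0 := by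
  have hp0 : p ≠ 0 := ne_of_gt hp.1
  have hp1 : (1:ℝ) - p ≠ 0 := by have := hp.2; intro h; linarith
  have hσ2 : σ * σ = 1 := by rcases hσ with rfl | rfl <;> norm_num
  have hp0c : (p:ℂ) ≠ 0 := by exact_mod_cast hp0
  have hp1c : (1:ℂ) - (p:ℂ) ≠ 0 := by
    intro h; apply hp1; have : ((1 - p : ℝ):ℂ) = 0 := by push_cast; linear_combination h
    exact_mod_cast this
  have h3t : 3 ≤ 3^t := by calc (3:ℕ) = 3^1 := by norm_num
                                _ ≤ 3^t := Nat.pow_le_pow_right (by norm_num) ht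
  have h3t1 : 3^(t+1) = 3*3^t := by rw [pow_succ, mul_comm]
  obtain ⟨m, r, hr3, rfl⟩ : ∃ m r, r < 3 ∧ x = 3*m+r :=
    ⟨x/3, x%3, Nat.mod_lt _ (by norm_num), (Nat.div_add_mod x 3).symm⟩
  interval_cases r
  · -- x = 3m
    rcases Nat.eq_zero_or_pos m with rfl | hm
    · -- x = 0
      have g0 : gg p σ t 0 = 0 := by have := gg_0 p σ t 0; simpa using this
      have g1 : gg p σ t 1 = 0 := by have := gg_1' p σ t 0 (Or.inl rfl); simpa using this
      have hne : ¬ ((0:ℕ) = 3^(t+1)) := by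
        have : 0 < 3^(t+1) := Nat.pow_pos (by norm_num)
        omega
      simp [ham, g0, g1, hne]
    · -- x = 3m, m ≥ 1
      have hx0 : ¬ (3*m+0 = 0) := by omega
      simp only [ham, Nat.add_zero, if_neg (by omega : ¬ 3*m = 0)]
      rw [hop_3m_left p m hm, hop_3m_right p m hm]
      rw [show 3*m - 1 = 3*(m-1)+2 by omega, gg_0]
      rw [cos_val k hk (3*m), if_pos (by omega)]
      -- subcases on m
      have hne3 : ∀ m' : ℕ, m' ≠ 1 → ¬ (3*m' = 3) := by intro m' h; omega
      rcases Nat.lt_or_ge m 2 with hm2 | hm2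
      · -- m = 1, x = 3
        have : m = 1 := by omega
        subst this
        rw [show (3*(1-1)+2 : ℕ) = 3*0+2 by omega, gg_2' p σ t 0 (Or.inl rfl)]
        rw [gg_1 p σ t 1 (by omega) (by omega)]
        rw [if_pos (show 3*1 = 3 from rfl)]
        rw [resid_of_mod 1 (by omega)]
        norm_num [cc]
      rcases Nat.lt_or_ge m (3^t) with hmt | hmt
      · -- 2 ≤ m < 3^t : interior
        rw [gg_2 p σ t (m-1) (by omega) (by omega), gg_1 p σ t m (by omega) hmt]
        rw [if_neg (hne3 m (by omega)), if_neg (show ¬ (3*m = 3^(t+1)) by rw [h3t1]; omega)]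
        rw [cc_step p σ m hm2]
        unfold qq
        rcases eq_or_ne (resid m) 1 with hres | hres
        · rw [if_pos hres, if_pos hres, if_pos hres]
          push_cast
          field_simp
          ring
        · rw [if_neg hres, if_neg hres, if_neg hres]
          push_cast
          field_simp
          ring
      rcases Nat.eq_or_lt_of_le hmt with hmeq | hmlt
      · -- m = 3^t : right boundary
        rw [gg_1' p σ t m (Or.inr (le_of_eq hmeq)), gg_2 p σ t (m-1) (by omega) (by omega)]
        rw [if_neg (hne3 m (by omega)), if_pos (show 3*m = 3^(t+1) by rw [h3t1]; omega)]
        rw [show resid m = 1 by rw [← hmeq, resid_pow], if_pos rfl]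
        rw [show m - 1 = 3^t - 1 by omega]
        push_cast
        ring
      · -- m > 3^t
        rw [gg_1' p σ t m (Or.inr (le_of_lt hmlt)),
          gg_2' p σ t (m-1) (Or.inr (by omega))]
        rw [if_neg (hne3 m (by omega)), if_neg (show ¬ (3*m = 3^(t+1)) by rw [h3t1]; omega)]
        rcases eq_or_ne (resid m) 1 with hres | hres <;> simp [hres]
  · -- x = 3m+1
    simp only [ham, if_neg (by omega : ¬ 3*m+1 = 0)]
    rw [show 3*m+1-1 = 3*m by omega, hop_3m1_right, gg_0]
    rw [cos_val k hk (3*m+1), if_neg (by omega)]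
    rw [show 3*m+1+1 = 3*m+2 by omega]
    rw [if_neg (by omega : ¬ 3*m+1 = 3), if_neg (by
      have : 3 ∣ 3^(t+1) := dvd_pow_self 3 (by omega)
      omega)]
    rcases Nat.lt_or_ge m 1 with hm | hm
    · have : m = 0 := by omega
      subst this
      rw [gg_1' p σ t 0 (Or.inl rfl), gg_2' p σ t 0 (Or.inl rfl)]
      simp
    rcases Nat.lt_or_ge m (3^t) with hmt | hmt
    · rw [gg_1 p σ t m hm hmt, gg_2 p σ t m hm hmt]
      push_cast
      ring
    · rw [gg_1' p σ t m (Or.inr hmt), gg_2' p σ t m (Or.inr hmt)]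
      simp
  · -- x = 3m+2
    simp only [ham, if_neg (by omega : ¬ 3*m+2 = 0)]
    rw [show 3*m+2-1 = 3*m+1 by omega, hop_3m2_left]
    rw [show 3*m+2+1 = 3*(m+1) by omega, gg_0]
    rw [cos_val k hk (3*m+2), if_neg (by omega)]
    rw [if_neg (by omega : ¬ 3*m+2 = 3), if_neg (by
      have : 3 ∣ 3^(t+1) := dvd_pow_self 3 (by omega)
      omega)]
    rcases Nat.lt_or_ge m 1 with hm | hm
    · have : m = 0 := by omega
      subst this
      rw [gg_1' p σ t 0 (Or.inl rfl), gg_2' p σ t 0 (Or.inl rfl)]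
      simp
    rcases Nat.lt_or_ge m (3^t) with hmt | hmt
    · rw [gg_1 p σ t m hm hmt, gg_2 p σ t m hm hmt]
      rcases hσ with rfl | rfl <;> (push_cast; ring)
    · rw [gg_1' p σ t m (Or.inr hmt), gg_2' p σ t m (Or.inr hmt)]
      simp

section weights
variable (p : ℝ) (hp : p ∈ Set.Ioo (0:ℝ) 1) (w : ℕ → ℝ) (hw : ∀ x, 0 < w x)
  (hrev : ∀ x y, w x * hop p x y = w y * hop p y x)

include hp hrev

lemma wblock (m : ℕ) : w (3*m+1) = w (3*m+2) := by
  have h := hrev (3*m+1) (3*m+2)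
  rw [show 3*m+2 = 3*m+1+1 by omega] at h
  rw [hop_right _ _ (by omega), resid_3m1, if_pos rfl] at h
  rw [hop_left, show 3*m+1+1 = 3*m+2 by omega, resid_3m2] at h
  simp only [if_neg (by norm_num : ¬ (2:ℕ) = 1)] at h
  have hp0 : p ≠ 0 := ne_of_gt hp.1
  field_simp at h
  linarith

lemma wmid (m : ℕ) :
    w (3*m+2) * (1-p) = w (3*m+3) * (if resid (m+1) = 1 then 1-p else p) := by
  have h := hrev (3*m+2) (3*m+3)
  rw [show 3*m+3 = 3*m+2+1 by omega] at h
  rw [hop_right _ _ (by omega), resid_3m2] at h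
  rw [if_neg (by norm_num : ¬ (2:ℕ) = 1)] at h
  rw [hop_left, show 3*m+2+1 = 3*(m+1) by omega, resid_three_mul (m+1) (by omega)] at h
  rw [show 3*(m+1) = 3*m+3 by omega] at h
  exact h

lemma wmid2 (m : ℕ) :
    w (3*m+3) * (if resid (m+1) = 1 then p else 1-p) = w (3*m+4) * (1-p) := by
  have h := hrev (3*m+3) (3*m+4)
  rw [show 3*m+4 = 3*m+3+1 by omega] at h
  rw [hop_right _ _ (by omega)] at h
  rw [show 3*m+3 = 3*(m+1) by omega, resid_three_mul (m+1) (by omega)] at h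
  rw [hop_left, show 3*(m+1)+1 = 3*(m+1)+1 from rfl, resid_3m1, if_pos rfl] at h
  rw [show 3*(m+1) = 3*m+3 by omega, show 3*m+3+1 = 3*m+4 by omega] at h
  exact h

lemma wstep (m : ℕ) : w (3*m+4) * qq p (m+1) = w (3*m+1) := by
  have h1 := wblock p hp w hrev m
  have h2 := wmid p hp w hrev m
  have h3 := wmid2 p hp w hrev m
  have hp0 : p ≠ 0 := ne_of_gt hp.1
  have hp1 : (1:ℝ) - p ≠ 0 := by have := hp.2; intro h; linarith
  unfold qq
  rcases eq_or_ne (resid (m+1)) 1 with hres | hres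
  · rw [if_pos hres] at h2 h3 ⊢
    have hw23 : w (3*m+2) = w (3*m+3) := by
      field_simp at h2
      linarith
    field_simp
    rw [h1, hw23]
    linarith [h3]
  · rw [if_neg hres] at h2 h3 ⊢
    have hw34 : w (3*m+3) = w (3*m+4) := by
      field_simp at h3
      linarith
    field_simp
    rw [h1, ← hw34]
    linarith [h2]

lemma wlast (m : ℕ) (hres : resid (m+1) = 1) : w (3*m+3) = w (3*m+1) := by
  have h1 := wblock p hp w hrev m
  have h2 := wmid p hp w hrev m
  have hp1 : (1:ℝ) - p ≠ 0 := by have := hp.2; intro h; linarith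
  rw [if_pos hres] at h2
  field_simp at h2
  linarith

lemma w43 : w 3 * p = w 4 * (1 - p) := by
  have h := hrev 3 4
  rw [show (4:ℕ) = 3+1 from rfl, hop_right _ _ (by omega)] at h
  rw [show (3:ℕ) = 3*1 by omega, resid_three_mul 1 (by omega), resid_of_mod 1 (by omega)] at h
  norm_num at h
  rw [hop_left, show (3:ℕ)+1 = 3*1+1 by norm_num, resid_3m1, if_pos rfl] at h
  simpa using h

omit hrev in
lemma qq_pos (m : ℕ) : 0 < qq p m := by
  have h1 := hp.1; have h2 := hp.2
  unfold qq
  split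
  · exact div_pos (by linarith) h1
  · exact div_pos h1 (by linarith)

omit hrev in
lemma PP_pos (m : ℕ) : 0 < PP p m := by
  induction m with
  | zero => norm_num [PP]
  | succ n ih =>
    rcases Nat.eq_zero_or_pos n with rfl | hn
    · norm_num [PP]
    · obtain ⟨j, rfl⟩ : ∃ j, n = j + 1 := ⟨n - 1, by omega⟩
      rw [show j+1+1 = j+2 from rfl, PP_step p (j+2) (by omega)]
      simpa using mul_pos (qq_pos p hp (j+2)) ih

lemma Klem (σ : ℝ) (hσ2 : σ * σ = 1) (m : ℕ) (hm : 1 ≤ m) :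
    w (3*m+1) * (cc p σ m)^2 = w 4 * PP p m := by
  induction m with
  | zero => omega
  | succ n ih =>
    rcases Nat.eq_zero_or_pos n with rfl | hn
    · norm_num [cc, PP]
    · have hq := wstep p hp w hrev n
      rw [cc_step p σ (n+1) (by omega), PP_step p (n+1) (by omega)]
      rw [show n+1-1 = n by omega]
      rw [show 3*(n+1)+1 = 3*n+4 by omega]
      have ihn := ih hn
      calc w (3*n+4) * (-σ * qq p (n+1) * cc p σ n)^2
          = (w (3*n+4) * qq p (n+1)) * qq p (n+1) * (σ*σ) * (cc p σ n)^2 := by ring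
        _ = w (3*n+1) * qq p (n+1) * (cc p σ n)^2 := by rw [hq, hσ2]; ring
        _ = qq p (n+1) * (w (3*n+1) * (cc p σ n)^2) := by ring
        _ = w 4 * (qq p (n+1) * PP p n) := by rw [ihn]; ring

end weights

section Pfacts
variable (p : ℝ) (hp : p ∈ Set.Ioo (0:ℝ) 1)

lemma qq_3i (i : ℕ) (hi : 1 ≤ i) : qq p (3*i) = qq p i := by
  unfold qq; rw [resid_three_mul i (by omega)]

lemma qq_3i1 (i : ℕ) : qq p (3*i+1) = (1-p)/p := by
  unfold qq; rw [resid_3m1, if_pos rfl]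

lemma qq_3i2 (i : ℕ) : qq p (3*i+2) = p/(1-p) := by
  unfold qq; rw [resid_3m2]; norm_num

include hp

lemma Pkey : ∀ i, 1 ≤ i → PP p (3*i+2) = PP p i := by
  have hp0 : p ≠ 0 := ne_of_gt hp.1
  have hp1 : (1:ℝ) - p ≠ 0 := by have := hp.2; intro h; linarith
  intro i hi
  induction i with
  | zero => omega
  | succ n ih =>
    rcases Nat.eq_zero_or_pos n with rfl | hn
    · -- i = 1 : PP 5 = PP 1
      rw [show 3*1+2 = 5 by norm_num]
      rw [show (5:ℕ) = 3+2 from rfl, PP_step p 5 (by omega)]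
      rw [show (5:ℕ)-1 = 4 from rfl, PP_step p 4 (by omega)]
      rw [show (4:ℕ)-1 = 3 from rfl, PP_step p 3 (by omega)]
      rw [show (3:ℕ)-1 = 2 from rfl, PP_step p 2 (by omega)]
      rw [show (2:ℕ)-1 = 1 from rfl]
      rw [show (5:ℕ) = 3*1+2 from rfl, qq_3i2]
      rw [show (4:ℕ) = 3*1+1 from rfl, qq_3i1]
      rw [show (3:ℕ) = 3*1 from rfl, qq_3i p 1 (by omega)]
      rw [show (2:ℕ) = 3*0+2 from rfl, qq_3i2]
      have : qq p 1 = (1-p)/p := by rw [show (1:ℕ) = 3*0+1 from rfl, qq_3i1]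
      rw [this]
      show _ = PP p 1
      field_simp
    · have key := ih hn
      rw [show 3*(n+1)+2 = (3*n+3)+2 by omega, PP_step p ((3*n+3)+2) (by omega)]
      rw [show (3*n+3)+2-1 = (3*n+2)+2 by omega, PP_step p ((3*n+2)+2) (by omega)]
      rw [show (3*n+2)+2-1 = (3*n+1)+2 by omega, PP_step p ((3*n+1)+2) (by omega)]
      rw [show (3*n+1)+2-1 = 3*n+2 by omega, key]
      rw [show (3*n+3)+2 = 3*(n+1)+2 by omega, qq_3i2]
      rw [show (3*n+2)+2 = 3*(n+1)+1 by omega, qq_3i1]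
      rw [show (3*n+1)+2 = 3*(n+1) by omega, qq_3i p (n+1) (by omega)]
      rw [PP_step p (n+1) (by omega), show n+1-1 = n by omega]
      field_simp

lemma Ppow : ∀ u, 1 ≤ u → PP p (3^u - 1) = p/(1-p) := by
  intro u hu
  induction u with
  | zero => omega
  | succ n ih =>
    rcases Nat.eq_zero_or_pos n with rfl | hn
    · rw [show 3^1-1 = 2 by norm_num, PP_step p 2 (by omega)]
      rw [show (2:ℕ)-1 = 1 from rfl, show (2:ℕ) = 3*0+2 from rfl, qq_3i2]
      show _ * PP p 1 = _
      norm_num [PP]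
    · have h3n : 3 ≤ 3^n := by
        calc (3:ℕ) = 3^1 := by norm_num
        _ ≤ 3^n := Nat.pow_le_pow_right (by norm_num) hn
      rw [show 3^(n+1)-1 = 3*(3^n-1)+2 by rw [pow_succ]; omega]
      rw [Pkey p hp (3^n-1) (by omega)]
      exact ih hn

end Pfacts

section meas
open scoped ENNReal

lemma lint (w : ℕ → ℝ) (h : ℕ → ℝ≥0∞) :
    ∫⁻ x, h x ∂(wMeasure w) = ∑' x, ENNReal.ofReal (w x) * h x := by
  unfold wMeasure
  rw [lintegral_sum_measure]
  congr 1
  funext x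
  rw [lintegral_smul_measure, lintegral_dirac, smul_eq_mul]

lemma wM_singleton (w : ℕ → ℝ) (x : ℕ) : ENNReal.ofReal (w x) ≤ wMeasure w {x} := by
  unfold wMeasure
  rw [Measure.sum_apply _ (measurableSet_singleton x)]
  have h1 : (ENNReal.ofReal (w x) • Measure.dirac x) {x} = ENNReal.ofReal (w x) := by
    simp
  rw [← h1]
  exact ENNReal.le_tsum x

lemma ae_to_eq (w : ℕ → ℝ) (hw : ∀ x, 0 < w x) {f g : ℕ → ℂ}
    (h : f =ᵐ[wMeasure w] g) : ∀ x, f x = g x := by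
  intro x
  by_contra hne
  have h0 : wMeasure w {y | ¬ f y = g y} = 0 := ae_iff.mp h
  have h1 : ({x} : Set ℕ) ⊆ {y | ¬ f y = g y} := by
    intro y hy
    rcases hy with rfl
    exact hne
  have h2 : wMeasure w {x} = 0 :=
    le_antisymm (h0 ▸ measure_mono h1) zero_le
  have h3 : (0:ℝ≥0∞) < ENNReal.ofReal (w x) := ENNReal.ofReal_pos.mpr (hw x)
  have h4 := lt_of_lt_of_le h3 (wM_singleton w x)
  rw [h2] at h4
  exact absurd h4 (lt_irrefl _)
  
lemma norm_sq_eq (μ : Measure ℕ) (v : Lp ℂ 2 μ) :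
    ‖v‖^2 = (∫⁻ x, ((‖(⇑v) x‖₊ : ℝ≥0∞))^2 ∂μ).toReal := by
  rw [Lp.norm_def, eLpNorm_eq_lintegral_rpow_enorm_toReal (by norm_num) (by norm_num)]
  simp only [enorm_eq_nnnorm]
  have h2 : (2:ℝ≥0∞).toReal = ((2:ℕ):ℝ) := by norm_num
  rw [h2]
  have hq : ∀ x : ℕ, ((‖(⇑v) x‖₊ : ℝ≥0∞)) ^ ((2:ℕ):ℝ) = ((‖(⇑v) x‖₊ : ℝ≥0∞))^(2:ℕ) := by
    intro x; rw [ENNReal.rpow_natCast]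
  simp only [hq]
  set I := ∫⁻ x, ((‖(⇑v) x‖₊ : ℝ≥0∞))^(2:ℕ) ∂μ
  rw [← ENNReal.toReal_rpow]
  rw [← Real.rpow_natCast (I.toReal ^ (1/((2:ℕ):ℝ))) 2, ← Real.rpow_mul ENNReal.toReal_nonneg]
  norm_num

lemma enn_sq (c : ℝ) : ((‖((c:ℝ):ℂ)‖₊ : ℝ≥0∞))^2 = ENNReal.ofReal (c^2) := by
  rw [← enorm_eq_nnnorm, ← ofReal_norm, ← ENNReal.ofReal_pow (norm_nonneg _)]
  congr 1
  rw [Complex.norm_real]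
  exact sq_abs c

end meas

section master
open scoped ENNReal

lemma lint_rpow (μ : Measure ℕ) (f : ℕ → ℂ) :
    ∫⁻ x, ((‖f x‖₊ : ℝ≥0∞))^((2:ℝ≥0∞).toReal) ∂μ = ∫⁻ x, ((‖f x‖₊ : ℝ≥0∞))^(2:ℕ) ∂μ := by
  congr 1
  funext x
  rw [show (2:ℝ≥0∞).toReal = ((2:ℕ):ℝ) by norm_num, ENNReal.rpow_natCast]

lemma master (p β : ℝ) (hp : p ∈ Set.Ioo (0:ℝ) 1)
    (k : ℕ) (hk : k = 1 ∨ k = 2)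
    (w : ℕ → ℝ) (hw : ∀ x, 0 < w x)
    (hrev : ∀ x y, w x * hop p x y = w y * hop p y x)
    (T : Lp ℂ 2 (wMeasure w) →L[ℂ] Lp ℂ 2 (wMeasure w))
    (hT : ∀ f : Lp ℂ 2 (wMeasure w), ⇑(T f) =ᵐ[wMeasure w] ham p β ((k:ℝ)/3) 0 ⇑f)
    (σ : ℝ) (hσ : σ = 1 ∨ σ = -1) :
    (((-β/2 - σ*p : ℝ) : ℂ)) ∈ spectrum ℂ T := by
  have hp0 : (0:ℝ) < p := hp.1
  have hp1 : p < 1 := hp.2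
  have hσ2 : σ * σ = 1 := by rcases hσ with rfl|rfl <;> norm_num
  set z : ℂ := ((-β/2 - σ*p : ℝ) : ℂ) with hzdef
  by_contra hmem
  rw [spectrum.notMem_iff] at hmem
  obtain ⟨B, hB⟩ := hmem.exists_left_inv
  set A : Lp ℂ 2 (wMeasure w) →L[ℂ] Lp ℂ 2 (wMeasure w) :=
    algebraMap ℂ (Lp ℂ 2 (wMeasure w) →L[ℂ] Lp ℂ 2 (wMeasure w)) z - T with hA
  have key : ∀ v : Lp ℂ 2 (wMeasure w), ‖v‖ ≤ ‖B‖ * ‖A v‖ := by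
    intro v
    have h1 : B (A v) = v := by
      have h := congrArg (fun S : Lp ℂ 2 (wMeasure w) →L[ℂ] Lp ℂ 2 (wMeasure w) => S v) hB
      simpa only [ContinuousLinearMap.mul_apply, ContinuousLinearMap.one_apply] using h
    conv_lhs => rw [← h1]
    exact B.le_opNorm _
  set C : ℝ := 2*p*(1-p)*(w 4) with hCdef
  set D : ℝ := w 4 * (p/(1-p)) with hDdef
  have hD : 0 < D := by
    have h4 := hw 4
    have : 0 < p/(1-p) := div_pos hp0 (by linarith)
    positivity
  have hC : 0 < C := by
    have h4 := hw 4
    have h1p : 0 < 1 - p := by linarith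
    positivity
  have main : ∀ t : ℕ, 1 ≤ t → (t:ℝ) * D ≤ ‖B‖^2 * C := by
    intro t ht
    have h3t : 3 ≤ 3^t := by
      calc (3:ℕ) = 3^1 := by norm_num
      _ ≤ 3^t := Nat.pow_le_pow_right (by norm_num) ht
    have h3t1 : (3:ℕ)^(t+1) = 3*3^t := by rw [pow_succ, mul_comm]
    set g : ℕ → ℂ := gg p σ t with hgdef
    have hsupp : ∀ x, 3^(t+1) ≤ x → g x = 0 := by
      intro x hx
      rw [hgdef]
      unfold gg
      rw [if_pos]
      right; right
      rw [h3t1] at hx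
      omega
    have hIg_repr : ∫⁻ x, ((‖g x‖₊:ℝ≥0∞))^(2:ℕ) ∂(wMeasure w)
        = ∑ x ∈ Finset.range (3^(t+1)), ENNReal.ofReal (w x) * ((‖g x‖₊:ℝ≥0∞))^(2:ℕ) := by
      rw [lint]
      exact tsum_eq_sum (fun b hb => by
        rw [hsupp b (by simpa using hb)]
        simp)
    have hIg_fin : ∫⁻ x, ((‖g x‖₊:ℝ≥0∞))^(2:ℕ) ∂(wMeasure w) ≠ ⊤ := by
      rw [hIg_repr]
      refine (ENNReal.sum_lt_top.mpr fun x _ => ?_).ne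
      exact ENNReal.mul_lt_top ENNReal.ofReal_lt_top
        (by rw [← ENNReal.coe_pow]; exact ENNReal.coe_lt_top)
    have hg_mem : MemLp g 2 (wMeasure w) := by
      constructor
      · exact (measurable_of_countable g).aestronglyMeasurable
      · rw [eLpNorm_eq_lintegral_rpow_enorm_toReal (by norm_num) (by norm_num)]
        simp only [enorm_eq_nnnorm]
        rw [lint_rpow]
        exact ENNReal.rpow_lt_top_of_nonneg (by norm_num) hIg_fin
    set u : Lp ℂ 2 (wMeasure w) := hg_mem.toLp g with hudef
    have hu : ∀ x, (⇑u) x = g x := ae_to_eq w hw (hg_mem.coeFn_toLp)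
    set E : ℕ → ℂ := fun x => if x = 3 then ((-p:ℝ):ℂ)
      else if x = 3^(t+1) then ((-(1-p)*σ*cc p σ (3^t-1) : ℝ):ℂ) else 0 with hEdef
    have hAu : ⇑(A u) =ᵐ[wMeasure w] fun x => -(E x) := by
      have hsub : A u = z • u - T u := by
        rw [hA]
        simp [Algebra.algebraMap_eq_smul_one, sub_smul]
      rw [hsub]
      have h1 := Lp.coeFn_sub (z • u) (T u)
      have h2 := Lp.coeFn_smul z u
      have h3 := hT u
      filter_upwards [h1, h2, h3] with x hx1 hx2 hx3
      rw [hx1]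
      simp only [Pi.sub_apply]
      rw [hx2]
      simp only [Pi.smul_apply]
      rw [hx3]
      have hfun : ham p β ((k:ℝ)/3) 0 (⇑u) = ham p β ((k:ℝ)/3) 0 g :=
        congrArg (ham p β ((k:ℝ)/3) 0) (funext hu)
      rw [hfun, hu x, smul_eq_mul]
      have hh := ham_eq p β σ hp hσ k hk t ht x
      rw [← hgdef] at hh
      have hE : (if x = 3 then ((-p:ℝ):ℂ)
          else if x = 3^(t+1) then ((-(1-p)*σ*cc p σ (3^t-1) : ℝ):ℂ) else 0) = E x := by
        rw [hEdef]
      rw [hE] at hh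
      linear_combination (-1 : ℂ) * hh
    -- value of the error integral
    have hne3 : (3:ℕ) ≠ 3^(t+1) := by
      rw [h3t1]; omega
    have hIE : ∫⁻ x, ((‖E x‖₊:ℝ≥0∞))^(2:ℕ) ∂(wMeasure w) = ENNReal.ofReal C := by
      rw [lint]
      rw [tsum_eq_sum (s := {3, 3^(t+1)}) (fun b hb => by
        simp only [Finset.mem_insert, Finset.mem_singleton] at hb
        push_neg at hb
        have hEb : E b = 0 := by
          rw [hEdef]
          simp only [if_neg hb.1, if_neg hb.2]
        rw [hEb]
        simp)]
      rw [Finset.sum_pair hne3]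
      have hE3 : E 3 = ((-p:ℝ):ℂ) := by rw [hEdef]; simp
      have hEX : E (3^(t+1)) = ((-(1-p)*σ*cc p σ (3^t-1) : ℝ):ℂ) := by
        rw [hEdef]
        simp only [if_neg (Ne.symm hne3)]
        simp
      rw [hE3, hEX, enn_sq, enn_sq]
      rw [← ENNReal.ofReal_mul (le_of_lt (hw 3)), ← ENNReal.ofReal_mul (le_of_lt (hw _)),
        ← ENNReal.ofReal_add (mul_nonneg (hw 3).le (sq_nonneg _)) (mul_nonneg (hw _).le (sq_nonneg _))]
      congr 1
      have hW43 := w43 p hp w hrev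
      have hWlast : w (3^(t+1)) = w (3*(3^t-1)+1) := by
        have hres : resid (3^t-1+1) = 1 := by
          rw [show 3^t-1+1 = 3^t by omega, resid_pow]
        have hl := wlast p hp w hrev (3^t-1) hres
        rw [show 3*(3^t-1)+3 = 3^(t+1) by rw [h3t1]; omega] at hl
        exact hl
      have hK := Klem p hp w hrev σ hσ2 (3^t-1) (by omega)
      rw [Ppow p hp t ht] at hK
      have hp1ne : (1:ℝ) - p ≠ 0 := by linarith
      have hK' : w (3*(3^t-1)+1) * (cc p σ (3^t-1))^2 * (1-p) = w 4 * p := by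
        field_simp at hK
        linarith [hK]
      have e1 : w 3 * (-p)^2 = w 4 * ((1-p)*p) := by linear_combination p * hW43
      have e2 : w (3^(t+1)) * (-(1-p)*σ*cc p σ (3^t-1))^2 = w 4 * (p*(1-p)) := by
        rw [hWlast]
        linear_combination ((1-p)*(σ*σ))*hK' + (w 4*p*(1-p))*hσ2
      rw [e1, e2, hCdef]
      ring
    -- lower bound for ‖u‖²
    have hIg_low : (t : ℝ≥0∞) * ENNReal.ofReal D
        ≤ ∫⁻ x, ((‖g x‖₊:ℝ≥0∞))^(2:ℕ) ∂(wMeasure w) := by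
      rw [lint]
      set e : ℕ → ℕ := fun v => 3*(3^v - 1)+1 with hedef
      have hinj : ∀ a ∈ Finset.Icc 1 t, ∀ b ∈ Finset.Icc 1 t, e a = e b → a = b := by
        intro a ha b hb hab
        rw [hedef] at hab
        simp only at hab
        have h1 : 1 ≤ 3^a := Nat.one_le_pow _ _ (by norm_num)
        have h2 : 1 ≤ 3^b := Nat.one_le_pow _ _ (by norm_num)
        have : (3:ℕ)^a = 3^b := by omega
        exact Nat.pow_right_injective (by norm_num) this
      have hterm : ∀ v ∈ Finset.Icc 1 t,
          ENNReal.ofReal (w (e v)) * ((‖g (e v)‖₊:ℝ≥0∞))^(2:ℕ) = ENNReal.ofReal D := by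
        intro v hv
        simp only [Finset.mem_Icc] at hv
        have h3v : 3 ≤ 3^v := by
          calc (3:ℕ) = 3^1 := by norm_num
          _ ≤ 3^v := Nat.pow_le_pow_right (by norm_num) hv.1
        have hm1 : 1 ≤ 3^v - 1 := by omega
        have hm2 : 3^v - 1 < 3^t := by
          have : (3:ℕ)^v ≤ 3^t := Nat.pow_le_pow_right (by norm_num) hv.2
          omega
        have hgv : g (e v) = ((cc p σ (3^v-1) : ℝ) : ℂ) := by
          rw [hgdef, hedef]
          exact gg_1 p σ t (3^v-1) hm1 hm2
        rw [hgv, enn_sq, ← ENNReal.ofReal_mul (le_of_lt (hw _))]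
        congr 1
        have hK := Klem p hp w hrev σ hσ2 (3^v-1) hm1
        rw [Ppow p hp v hv.1] at hK
        rw [hedef]
        simp only
        rw [hK, hDdef]
      calc (t : ℝ≥0∞) * ENNReal.ofReal D
          = ∑ v ∈ Finset.Icc 1 t, ENNReal.ofReal D := by
            rw [Finset.sum_const, Nat.card_Icc]
            simp [nsmul_eq_mul]
        _ = ∑ v ∈ Finset.Icc 1 t,
              ENNReal.ofReal (w (e v)) * ((‖g (e v)‖₊:ℝ≥0∞))^(2:ℕ) := by
            exact (Finset.sum_congr rfl hterm).symm
        _ = ∑ x ∈ (Finset.Icc 1 t).image e,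
              ENNReal.ofReal (w x) * ((‖g x‖₊:ℝ≥0∞))^(2:ℕ) := by
            rw [Finset.sum_image hinj]
        _ ≤ ∑' x, ENNReal.ofReal (w x) * ((‖g x‖₊:ℝ≥0∞))^(2:ℕ) := ENNReal.sum_le_tsum _
    -- put it together
    have hnormu : (t:ℝ) * D ≤ ‖u‖^2 := by
      rw [norm_sq_eq]
      have hcongr : ∫⁻ x, ((‖(⇑u) x‖₊:ℝ≥0∞))^(2:ℕ) ∂(wMeasure w)
          = ∫⁻ x, ((‖g x‖₊:ℝ≥0∞))^(2:ℕ) ∂(wMeasure w) := by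
        congr 1
        funext x
        rw [hu x]
      rw [hcongr]
      calc (t:ℝ)*D = ((t:ℝ≥0∞) * ENNReal.ofReal D).toReal := by
            rw [ENNReal.toReal_mul, ENNReal.toReal_natCast, ENNReal.toReal_ofReal hD.le]
        _ ≤ _ := ENNReal.toReal_mono hIg_fin hIg_low
    have hnorme : ‖A u‖^2 = C := by
      rw [norm_sq_eq]
      have hcongr : ∫⁻ x, ((‖(⇑(A u)) x‖₊:ℝ≥0∞))^(2:ℕ) ∂(wMeasure w)
          = ∫⁻ x, ((‖E x‖₊:ℝ≥0∞))^(2:ℕ) ∂(wMeasure w) := by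
        apply lintegral_congr_ae
        filter_upwards [hAu] with x hx
        rw [hx]
        rw [nnnorm_neg]
      rw [hcongr, hIE, ENNReal.toReal_ofReal hC.le]
    have h1 := key u
    have h2 : ‖u‖^2 ≤ ‖B‖^2 * ‖A u‖^2 := by
      have hBn : (0:ℝ) ≤ ‖B‖ := norm_nonneg _
      have hAn : (0:ℝ) ≤ ‖A u‖ := norm_nonneg _
      have hun : (0:ℝ) ≤ ‖u‖ := norm_nonneg _
      nlinarith
    rw [hnorme] at h2
    linarith
  obtain ⟨n, hn⟩ := exists_nat_gt (‖B‖^2 * C / D)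
  have h1 := main (n+1) (by omega)
  have h2 : ‖B‖^2 * C / D < ((n:ℝ)+1) := by
    calc ‖B‖^2 * C / D < n := hn
    _ ≤ (n:ℝ)+1 := by linarith
  have h3 : ‖B‖^2 * C < ((n:ℝ)+1) * D := by
    rw [div_lt_iff₀ hD] at h2
    linarith
  have h4 : (((n+1:ℕ)):ℝ) * D = ((n:ℝ)+1)*D := by push_cast; ring
  linarith [h4 ▸ h1]
end master

end ExcAux

/-- Both exceptional points `−β/2 − p` and `−β/2 + p` belong to the spectrum of the
bounded self-adjoint operator `H_{p,β,k/3,0}` on `ℓ²(ℤ₊, dπ)`. -/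
theorem exceptional_points_mem_spectrum (p β : ℝ) (hp : p ∈ Set.Ioo (0 : ℝ) 1)
    (k : ℕ) (hk : k = 1 ∨ k = 2)
    (w : ℕ → ℝ) (hw : ∀ x, 0 < w x)
    (hrev : ∀ x y, w x * hop p x y = w y * hop p y x)
    (T : Lp ℂ 2 (wMeasure w) →L[ℂ] Lp ℂ 2 (wMeasure w))
    (hT : ∀ f : Lp ℂ 2 (wMeasure w), ⇑(T f) =ᵐ[wMeasure w] ham p β ((k : ℝ) / 3) 0 ⇑f) :
    (-(β : ℂ) / 2 - (p : ℂ)) ∈ spectrum ℂ T ∧ (-(β : ℂ) / 2 + (p : ℂ)) ∈ spectrum ℂ T := by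
  constructor
  · have h := master p β hp k hk w hw hrev T hT 1 (Or.inl rfl)
    have he : ((-β/2 - 1*p : ℝ):ℂ) = -(β:ℂ)/2 - (p:ℂ) := by push_cast; ring
    rwa [he] at h
  · have h := master p β hp k hk w hw hrev T hT (-1) (Or.inr rfl)
    have he : ((-β/2 - (-1)*p : ℝ):ℂ) = -(β:ℂ)/2 + (p:ℂ) := by push_cast; ring
    rwa [he] at h
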